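/- arXiv:2503.15258 — 5 statements merged into one kernel-verified Lean document; each statement's English description precedes it below -/
import Mathlib

section
/- Let A and J be invertible real n×n matrices with Jᵀ = J, let H = (A + J Aᵀ J⁻¹)/2 and S = (A − J Aᵀ J⁻¹)/2, and assume that the symmetric matrix HJ is positive definite. Then for every α > 0 the matrices H + αJ⁻¹ and S + αJ⁻¹ are invertible, and the iteration matrix T_α = (S + αJ⁻¹)⁻¹ (αJ⁻¹ − H) (H + αJ⁻¹)⁻¹ (αJ⁻¹ − S) of the J-HSS method has spectral radius strictly less than 1 (so the J-HSS iteration converges to the unique solution of Ax = b for every initial guess). -/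
open Matrix

variable {n : ℕ}

noncomputable def phi (n : ℕ) : Matrix (Fin n) (Fin n) ℝ →+* Matrix (Fin n) (Fin n) ℂ :=
  (Complex.ofRealHom).mapMatrix

lemma phi_apply (X : Matrix (Fin n) (Fin n) ℝ) : phi n X = X.map Complex.ofReal := rfl

lemma phi_conjTranspose (X : Matrix (Fin n) (Fin n) ℝ) : (phi n X)ᴴ = phi n Xᵀ := by
  ext i j
  simp [phi, conjTranspose_apply, Complex.conj_ofReal]

lemma phi_smul (c : ℝ) (X : Matrix (Fin n) (Fin n) ℝ) :
    phi n (c • X) = (c : ℂ) • phi n X := by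
  ext i j
  simp [phi]

lemma star_mulVec_dot (X Y : Matrix (Fin n) (Fin n) ℂ) (y : Fin n → ℂ) :
    star (X *ᵥ y) ⬝ᵥ (Y *ᵥ y) = star y ⬝ᵥ ((Xᴴ * Y) *ᵥ y) := by
  rw [star_mulVec, dotProduct_mulVec, vecMul_vecMul, ← dotProduct_mulVec]

noncomputable def nsq (x : Fin n → ℂ) : ℝ := (star x ⬝ᵥ x).re

lemma nsq_eq_sum (x : Fin n → ℂ) : nsq x = ∑ i, Complex.normSq (x i) := by
  simp [nsq, dotProduct, Complex.re_sum, Complex.normSq_apply]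

lemma nsq_nonneg (x : Fin n → ℂ) : 0 ≤ nsq x := by
  rw [nsq_eq_sum]; exact Finset.sum_nonneg fun i _ => Complex.normSq_nonneg _

lemma nsq_pos {x : Fin n → ℂ} (hx : x ≠ 0) : 0 < nsq x := by
  rcases Function.ne_iff.mp hx with ⟨i, hi⟩
  rw [nsq_eq_sum]
  exact Finset.sum_pos' (fun j _ => Complex.normSq_nonneg _)
    ⟨i, Finset.mem_univ i, Complex.normSq_pos.mpr hi⟩

lemma nsq_smul (c : ℂ) (x : Fin n → ℂ) : nsq (c • x) = Complex.normSq c * nsq x := by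
  simp [nsq_eq_sum, Finset.mul_sum, Complex.normSq_mul]

lemma re_dot_posdef {M : Matrix (Fin n) (Fin n) ℝ} (hM : M.PosDef)
    {y : Fin n → ℂ} (hy : y ≠ 0) :
    0 < (star y ⬝ᵥ ((M.map Complex.ofReal) *ᵥ y)).re := by
  set a : Fin n → ℝ := fun i => (y i).re with ha
  set b : Fin n → ℝ := fun i => (y i).im with hb
  have key : (star y ⬝ᵥ ((M.map Complex.ofReal) *ᵥ y)).re
      = a ⬝ᵥ (M *ᵥ a) + b ⬝ᵥ (M *ᵥ b) := by
    simp only [dotProduct, mulVec, Pi.star_apply, Complex.re_sum, Matrix.map_apply]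
    rw [← Finset.sum_add_distrib]
    refine Finset.sum_congr rfl fun i _ => ?_
    rw [Finset.mul_sum, Finset.mul_sum, Finset.mul_sum, Complex.re_sum,
      ← Finset.sum_add_distrib]
    refine Finset.sum_congr rfl fun j _ => ?_
    simp [Complex.mul_re, ha, hb]
  rw [key]
  have hab : a ≠ 0 ∨ b ≠ 0 := by
    by_contra h
    push_neg at h
    apply hy
    funext i
    have h1 : a i = 0 := by rw [h.1]; rfl
    have h2 : b i = 0 := by rw [h.2]; rfl
    exact Complex.ext h1 h2
  have hsa : ∀ x : Fin n → ℝ, 0 ≤ x ⬝ᵥ (M *ᵥ x) := by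
    intro x
    simpa using hM.posSemidef.dotProduct_mulVec_nonneg x
  have hsp : ∀ x : Fin n → ℝ, x ≠ 0 → 0 < x ⬝ᵥ (M *ᵥ x) := by
    intro x hx
    simpa using hM.dotProduct_mulVec_pos hx
  rcases hab with h | h
  · have := hsp a h; have := hsa b; linarith
  · have := hsp b h; have := hsa a; linarith

lemma posdef_smul_one {c : ℝ} (hc : 0 < c) :
    (c • (1 : Matrix (Fin n) (Fin n) ℝ)).PosDef := by
  rw [smul_one_eq_diagonal]
  exact Matrix.posDef_diagonal_iff.mpr fun _ => hc

lemma skew_isUnit {N : Matrix (Fin n) (Fin n) ℝ} (hN : Nᵀ = -N) {α : ℝ} (hα : 0 < α) :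
    IsUnit (α • 1 + N) := by
  have h1 : (α • 1 + N)ᵀ * (α • 1 + N) = (α * α) • 1 + Nᵀ * N := by
    rw [transpose_add, transpose_smul, transpose_one, hN]
    simp only [add_mul, mul_add, smul_mul_assoc, mul_smul_comm, one_mul, mul_one,
      smul_smul, neg_mul, smul_neg]
    module
  have hpd : ((α * α) • 1 + Nᵀ * N : Matrix (Fin n) (Fin n) ℝ).PosDef :=
    (posdef_smul_one (by positivity)).add_posSemidef
      (by simpa using Matrix.posSemidef_conjTranspose_mul_self N)
  have hdet : ((α • 1 + N)ᵀ * (α • 1 + N)).det = ((α • 1 + N).det) ^ 2 := by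
    rw [det_mul, det_transpose, sq]
  have h2 : (0:ℝ) < ((α • 1 + N).det) ^ 2 := by
    rw [← hdet, h1]; exact hpd.det_pos
  rw [Matrix.isUnit_iff_isUnit_det, isUnit_iff_ne_zero]
  intro h
  rw [h] at h2
  simp at h2

/-- Convergence of the `J`-HSS iteration, symmetric case: if `A, J` are invertible,
`Jᵀ = J`, and the symmetric matrix `HJ` is positive definite (where `H` and `S` are the
`J`-symmetric and `J`-skew-symmetric parts of `A`), then for every `α > 0` the matrices
`H + αJ⁻¹` and `S + αJ⁻¹` are invertible and the `J`-HSS iteration matrix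
`T_α = (S + αJ⁻¹)⁻¹ (αJ⁻¹ − H) (H + αJ⁻¹)⁻¹ (αJ⁻¹ − S)` has spectral radius `< 1`. -/
theorem jHSS_convergence_symm (n : ℕ) (A J : Matrix (Fin n) (Fin n) ℝ)
    (hA : IsUnit A) (hJ : IsUnit J) (hJt : Jᵀ = J)
    (H S : Matrix (Fin n) (Fin n) ℝ)
    (hH : H = (1/2 : ℝ) • (A + J * Aᵀ * J⁻¹))
    (hS : S = (1/2 : ℝ) • (A - J * Aᵀ * J⁻¹))
    (hpd : (H * J).PosDef)
    (α : ℝ) (hα : 0 < α) :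
    IsUnit (H + α • J⁻¹) ∧ IsUnit (S + α • J⁻¹) ∧
    spectralRadius ℂ
      (((S + α • J⁻¹)⁻¹ * (α • J⁻¹ - H) * (H + α • J⁻¹)⁻¹ * (α • J⁻¹ - S)).map
        Complex.ofReal) < 1 := by
  classical
  have hJd : IsUnit J.det := (Matrix.isUnit_iff_isUnit_det J).mp hJ
  have hJl : J⁻¹ * J = 1 := Matrix.nonsing_inv_mul J hJd
  have hJr : J * J⁻¹ = 1 := Matrix.mul_nonsing_inv J hJd
  have hJit : (J⁻¹)ᵀ = J⁻¹ := by rw [Matrix.transpose_nonsing_inv, hJt]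
  have hc1 : ∀ X : Matrix (Fin n) (Fin n) ℝ, J * (J⁻¹ * X) = X := fun X => by
    rw [← Matrix.mul_assoc, hJr, one_mul]
  have hc2 : ∀ X : Matrix (Fin n) (Fin n) ℝ, J⁻¹ * (J * X) = X := fun X => by
    rw [← Matrix.mul_assoc, hJl, one_mul]
  set M := H * J with hMdef
  set N := S * J with hNdef
  have hMt : Mᵀ = M := by
    have h := hpd.isHermitian
    rwa [Matrix.IsHermitian, conjTranspose_eq_transpose_of_trivial] at h
  have hSt : Sᵀ = (1/2 : ℝ) • (Aᵀ - J⁻¹ * (A * J)) := by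
    rw [hS]
    simp [transpose_smul, transpose_sub, transpose_mul, hJt, hJit, Matrix.mul_assoc]
  have hNt : Nᵀ = -N := by
    rw [hNdef, transpose_mul, hJt, hSt, hS]
    simp only [mul_smul_comm, smul_mul_assoc, Matrix.mul_sub,
      Matrix.sub_mul, Matrix.mul_assoc, hc1, hc2, hJl, hJr, Matrix.mul_one, smul_sub]
    module
  -- invertibility of the four shifted matrices
  have hBmpd : (M + α • 1).PosDef := hpd.add_posSemidef (posdef_smul_one hα).posSemidef
  have uBm : IsUnit (M + α • 1) := hBmpd.isUnit
  have uBn : IsUnit (N + α • 1) := by rw [add_comm]; exact skew_isUnit hNt hα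
  have uBn' : IsUnit (α • 1 - N) := by
    have hnt : (-N)ᵀ = -(-N) := by rw [transpose_neg, hNt, neg_neg]
    have h := skew_isUnit hnt hα
    rwa [← sub_eq_add_neg] at h
  have uBmd : IsUnit (M + α • 1).det := (Matrix.isUnit_iff_isUnit_det _).mp uBm
  have uBnd : IsUnit (N + α • 1).det := (Matrix.isUnit_iff_isUnit_det _).mp uBn
  have uBn'd : IsUnit (α • 1 - N).det := (Matrix.isUnit_iff_isUnit_det _).mp uBn'
  have hBml : (M + α • 1)⁻¹ * (M + α • 1) = 1 := Matrix.nonsing_inv_mul _ uBmd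
  have hBmr : (M + α • 1) * (M + α • 1)⁻¹ = 1 := Matrix.mul_nonsing_inv _ uBmd
  have hBnl : (N + α • 1)⁻¹ * (N + α • 1) = 1 := Matrix.nonsing_inv_mul _ uBnd
  have hBnr : (N + α • 1) * (N + α • 1)⁻¹ = 1 := Matrix.mul_nonsing_inv _ uBnd
  have hBn'l : (α • 1 - N)⁻¹ * (α • 1 - N) = 1 := Matrix.nonsing_inv_mul _ uBn'd
  have hBn'r : (α • 1 - N) * (α • 1 - N)⁻¹ = 1 := Matrix.mul_nonsing_inv _ uBn'd
  -- key factorizations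
  have k1 : H + α • J⁻¹ = (M + α • 1) * J⁻¹ := by
    rw [hMdef]
    simp [Matrix.add_mul, smul_mul_assoc, Matrix.mul_assoc, hJr]
  have k2 : S + α • J⁻¹ = (N + α • 1) * J⁻¹ := by
    rw [hNdef]
    simp [Matrix.add_mul, smul_mul_assoc, Matrix.mul_assoc, hJr]
  have k3 : α • J⁻¹ - H = (α • 1 - M) * J⁻¹ := by
    rw [hMdef]
    simp [Matrix.sub_mul, smul_mul_assoc, Matrix.mul_assoc, hJr]
  have k4 : α • J⁻¹ - S = (α • 1 - N) * J⁻¹ := by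
    rw [hNdef]
    simp [Matrix.sub_mul, smul_mul_assoc, Matrix.mul_assoc, hJr]
  have uJi : IsUnit (J⁻¹ : Matrix (Fin n) (Fin n) ℝ) := Matrix.isUnit_nonsing_inv_iff.mpr hJ
  have uH : IsUnit (H + α • J⁻¹) := by rw [k1]; exact uBm.mul uJi
  have uS : IsUnit (S + α • J⁻¹) := by rw [k2]; exact uBn.mul uJi
  refine ⟨uH, uS, ?_⟩
  -- names
  set Bm := M + α • 1 with hBm
  set Bn := N + α • 1 with hBn
  set P := (α • 1 - M) * Bm⁻¹ with hP
  set Q := (α • 1 - N) * Bn⁻¹ with hQ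
  set W := J * Bn⁻¹ with hW
  set W' := Bn * J⁻¹ with hW'
  have hWW' : W * W' = 1 := by
    rw [hW, hW', Matrix.mul_assoc, ← Matrix.mul_assoc Bn⁻¹, hBnl, one_mul, hJr]
  have hW'W : W' * W = 1 := by
    rw [hW, hW', Matrix.mul_assoc, ← Matrix.mul_assoc J⁻¹, hJl, one_mul, hBnr]
  have hcn : ∀ X : Matrix (Fin n) (Fin n) ℝ, Bn⁻¹ * (Bn * X) = X := fun X => by
    rw [← Matrix.mul_assoc, hBnl, one_mul]
  have hT : (S + α • J⁻¹)⁻¹ * (α • J⁻¹ - H) * (H + α • J⁻¹)⁻¹ * (α • J⁻¹ - S)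
      = W * (P * Q) * W' := by
    rw [k1, k2, k3, k4, Matrix.mul_inv_rev, Matrix.mul_inv_rev,
      Matrix.nonsing_inv_nonsing_inv J hJd, hP, hQ, hW, hW']
    simp only [Matrix.mul_assoc, hc2, hcn]
  -- complexify
  have hTc : ((S + α • J⁻¹)⁻¹ * (α • J⁻¹ - H) * (H + α • J⁻¹)⁻¹ * (α • J⁻¹ - S)).map
      Complex.ofReal = phi n W * (phi n P * phi n Q) * phi n W' := by
    rw [← phi_apply, hT]
    simp only [_root_.map_mul]
  rw [hTc]
  set u : (Matrix (Fin n) (Fin n) ℂ)ˣ :=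
    ⟨phi n W, phi n W', by rw [← _root_.map_mul, hWW', _root_.map_one], by rw [← _root_.map_mul, hW'W, _root_.map_one]⟩
    with hu
  have hspec : spectrum ℂ (phi n W * (phi n P * phi n Q) * phi n W')
      = spectrum ℂ (phi n P * phi n Q) := by
    have := spectrum.units_conjugate (R := ℂ) (a := phi n P * phi n Q) (u := u)
    simpa [hu] using this
  -- unitarity of Q over ℂ
  have hBnt : Bnᵀ = α • 1 - N := by
    rw [hBn, transpose_add, hNt, transpose_smul, transpose_one, sub_eq_add_neg, add_comm]
  have hBn't : (α • 1 - N)ᵀ = Bn := by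
    rw [transpose_sub, hNt, transpose_smul, transpose_one, sub_neg_eq_add, add_comm, hBn]
  have hcommN : Bn * (α • 1 - N) = (α • 1 - N) * Bn := by
    rw [hBn]
    simp only [Matrix.mul_sub, Matrix.sub_mul, Matrix.add_mul, Matrix.mul_add,
      mul_smul_comm, smul_mul_assoc, Matrix.mul_one, Matrix.one_mul]
    module
  have hQtQ : Qᵀ * Q = 1 := by
    rw [hQ, transpose_mul, Matrix.transpose_nonsing_inv, hBnt, hBn't]
    calc (α • 1 - N)⁻¹ * Bn * ((α • 1 - N) * Bn⁻¹)
        = (α • 1 - N)⁻¹ * (Bn * (α • 1 - N)) * Bn⁻¹ := by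
          simp only [Matrix.mul_assoc]
      _ = (α • 1 - N)⁻¹ * ((α • 1 - N) * Bn) * Bn⁻¹ := by rw [hcommN]
      _ = 1 := by
          rw [← Matrix.mul_assoc, hBn'l, one_mul, hBnr]
  have hQc : (phi n Q)ᴴ * phi n Q = 1 := by
    rw [phi_conjTranspose, ← _root_.map_mul, hQtQ, _root_.map_one]
  -- symmetric facts for P
  have hBmt : Bmᵀ = Bm := by
    rw [hBm, transpose_add, hMt, transpose_smul, transpose_one]
  have hBm't : (α • 1 - M)ᵀ = α • 1 - M := by
    rw [transpose_sub, hMt, transpose_smul, transpose_one]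
  have hPBm : P * Bm = α • 1 - M := by
    rw [hP, mul_assoc, hBml, mul_one]
  have hsubM : Bm * Bm - (α • 1 - M) * (α • 1 - M) = (4 * α) • M := by
    rw [hBm]
    simp only [Matrix.mul_sub, Matrix.sub_mul, Matrix.add_mul, Matrix.mul_add,
      mul_smul_comm, smul_mul_assoc, Matrix.mul_one, Matrix.one_mul]
    module
  -- contraction property of P over ℂ
  have hPlt : ∀ w : Fin n → ℂ, w ≠ 0 → nsq (phi n P *ᵥ w) < nsq w := by
    intro w hw
    set y := phi n Bm⁻¹ *ᵥ w with hy
    have hyw : phi n Bm *ᵥ y = w := by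
      rw [hy, mulVec_mulVec, ← _root_.map_mul, hBmr, _root_.map_one, one_mulVec]
    have hy0 : y ≠ 0 := by
      intro h
      rw [h, mulVec_zero] at hyw
      exact hw hyw.symm
    have hPw : phi n P *ᵥ w = phi n (α • 1 - M) *ᵥ y := by
      rw [← hyw, mulVec_mulVec, ← _root_.map_mul, hPBm]
    have e1 : nsq w = (star y ⬝ᵥ (phi n (Bm * Bm) *ᵥ y)).re := by
      rw [← hyw, nsq, star_mulVec_dot, phi_conjTranspose, hBmt, ← _root_.map_mul]
    have e2 : nsq (phi n P *ᵥ w) = (star y ⬝ᵥ (phi n ((α • 1 - M) * (α • 1 - M)) *ᵥ y)).re := by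
      rw [hPw, nsq, star_mulVec_dot, phi_conjTranspose, hBm't, ← _root_.map_mul]
    have e3 : nsq w - nsq (phi n P *ᵥ w)
        = 4 * α * (star y ⬝ᵥ (phi n M *ᵥ y)).re := by
      rw [e1, e2, ← Complex.sub_re, ← dotProduct_sub, ← Matrix.sub_mulVec, ← _root_.map_sub,
        hsubM, phi_smul, smul_mulVec]
      rw [dotProduct_smul]
      simp [Complex.re_ofReal_mul]
    have hpos : 0 < (star y ⬝ᵥ (phi n M *ᵥ y)).re := re_dot_posdef hpd hy0
    have : 0 < 4 * α * (star y ⬝ᵥ (phi n M *ᵥ y)).re := by positivity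
    linarith [e3 ▸ this]
  -- Q preserves nsq
  have hQn : ∀ v : Fin n → ℂ, nsq (phi n Q *ᵥ v) = nsq v := by
    intro v
    rw [nsq, star_mulVec_dot, hQc, one_mulVec, nsq]
  -- all eigenvalues have normSq < 1
  have hbound : ∀ lam ∈ spectrum ℂ (phi n P * phi n Q), Complex.normSq lam < 1 := by
    intro lam hlam
    rw [spectrum.mem_iff] at hlam
    have hndet : (lam • 1 - phi n P * phi n Q).det = 0 := by
      by_contra hne
      exact hlam (by
        rw [Matrix.isUnit_iff_isUnit_det]
        exact (isUnit_iff_ne_zero.mpr (by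
          simpa [Algebra.algebraMap_eq_smul_one] using hne)))
    obtain ⟨v, hv0, hv⟩ := (Matrix.exists_mulVec_eq_zero_iff).mpr (by
      simpa [Algebra.algebraMap_eq_smul_one] using hndet)
    have heig : phi n P *ᵥ (phi n Q *ᵥ v) = lam • v := by
      rw [Matrix.sub_mulVec, smul_mulVec, one_mulVec, sub_eq_zero] at hv
      rw [mulVec_mulVec]
      exact hv.symm
    have hu0 : phi n Q *ᵥ v ≠ 0 := by
      intro h
      have := hQn v
      rw [h] at this
      have h0 : nsq v = 0 := by simpa [nsq] using this.symm
      exact absurd h0 (ne_of_gt (nsq_pos hv0))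
    have hlt : Complex.normSq lam * nsq v < nsq v := by
      calc Complex.normSq lam * nsq v = nsq (lam • v) := (nsq_smul _ _).symm
        _ = nsq (phi n P *ᵥ (phi n Q *ᵥ v)) := by rw [heig]
        _ < nsq (phi n Q *ᵥ v) := hPlt _ hu0
        _ = nsq v := hQn v
    have hvpos : 0 < nsq v := nsq_pos hv0
    nlinarith
  -- conclude on the spectral radius
  have hfin : (spectrum ℂ (phi n P * phi n Q)).Finite := Matrix.finite_spectrum _
  rw [spectralRadius, hspec]
  set F := hfin.toFinset with hF
  have hFs : F.sup (fun k => ‖k‖₊) < 1 := by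
    rw [Finset.sup_lt_iff (by norm_num : (⊥ : NNReal) < 1)]
    intro k hk
    have hk' : Complex.normSq k < 1 := hbound k (hfin.mem_toFinset.mp hk)
    have : ‖k‖ ^ 2 = Complex.normSq k := Complex.sq_norm k
    rw [← NNReal.coe_lt_coe]
    have hnn : (0:ℝ) ≤ ‖k‖ := norm_nonneg k
    simp only [coe_nnnorm, NNReal.coe_one]
    nlinarith
  set r : NNReal := F.sup fun k => ‖k‖₊ with hr
  have hle : (⨆ k ∈ spectrum ℂ (phi n P * phi n Q), (‖k‖₊ : ENNReal)) ≤ (r : ENNReal) :=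
    iSup₂_le fun k hk =>
      ENNReal.coe_le_coe.mpr (Finset.le_sup (f := fun k => ‖k‖₊) (hfin.mem_toFinset.mpr hk))
  exact lt_of_le_of_lt hle (by exact_mod_cast hFs)
end

section
/- Let A and J be invertible real n×n matrices with Jᵀ = −J, let H = (A + J Aᵀ J⁻¹)/2 and S = (A − J Aᵀ J⁻¹)/2, and assume that the symmetric matrix SJ is positive definite. Then n is even, and for every α > 0 the matrices H + αJ⁻¹ and S + αJ⁻¹ are invertible and the iteration matrix T_α = (S + αJ⁻¹)⁻¹ (αJ⁻¹ − H) (H + αJ⁻¹)⁻¹ (αJ⁻¹ − S) of the J-HSS method has spectral radius strictly less than 1. -/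
open Matrix

private lemma jhss_isUnit_of_dot_pos {n : ℕ} (M : Matrix (Fin n) (Fin n) ℝ)
    (h : ∀ v : Fin n → ℝ, v ≠ 0 → 0 < v ⬝ᵥ (M *ᵥ v)) : IsUnit M := by
  rw [← Matrix.mulVec_injective_iff_isUnit]
  intro x y hxy
  by_contra hne
  have hd : x - y ≠ 0 := sub_ne_zero.mpr hne
  have h0 : M *ᵥ (x - y) = 0 := by rw [Matrix.mulVec_sub, hxy, sub_self]
  have := h _ hd
  rw [h0] at this
  simp at this

private lemma jhss_skew_dot {n : ℕ} {M : Matrix (Fin n) (Fin n) ℝ} (hM : Mᵀ = -M)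
    (v : Fin n → ℝ) : v ⬝ᵥ (M *ᵥ v) = 0 := by
  have h1 : v ⬝ᵥ (M *ᵥ v) = (Mᵀ *ᵥ v) ⬝ᵥ v := by
    rw [Matrix.dotProduct_mulVec, Matrix.mulVec_transpose]
  have h2 : (Mᵀ *ᵥ v) ⬝ᵥ v = -((M *ᵥ v) ⬝ᵥ v) := by
    rw [hM]; simp [Matrix.neg_mulVec]
  have h3 : (M *ᵥ v) ⬝ᵥ v = v ⬝ᵥ (M *ᵥ v) := dotProduct_comm _ _
  linarith [h1, h2.symm ▸ h1, h3]

private lemma jhss_dot_self_pos {n : ℕ} {v : Fin n → ℝ} (hv : v ≠ 0) : 0 < v ⬝ᵥ v := by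
  have h0 : 0 ≤ v ⬝ᵥ v := Finset.sum_nonneg fun i _ => mul_self_nonneg _
  rcases h0.lt_or_eq with h | h
  · exact h
  · exact absurd (dotProduct_self_eq_zero.mp h.symm) hv

private lemma jhss_posdef_map_re {n : ℕ} {M : Matrix (Fin n) (Fin n) ℝ} (hM : M.PosDef)
    (y : Fin n → ℂ) (hy : y ≠ 0) :
    0 < (star y ⬝ᵥ ((M.map Complex.ofReal) *ᵥ y)).re := by
  classical
  set a : Fin n → ℝ := fun i => (y i).re with ha
  set b : Fin n → ℝ := fun i => (y i).im with hb
  have key : (star y ⬝ᵥ ((M.map Complex.ofReal) *ᵥ y)).re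
      = a ⬝ᵥ (M *ᵥ a) + b ⬝ᵥ (M *ᵥ b) := by
    have h1 : star y ⬝ᵥ ((M.map Complex.ofReal) *ᵥ y)
        = ∑ i, ∑ j, ((M i j : ℂ) * ((starRingEnd ℂ) (y i) * y j)) := by
      simp only [dotProduct, Matrix.mulVec, Matrix.map_apply, Pi.star_apply,
        Finset.mul_sum, RCLike.star_def]
      refine Finset.sum_congr rfl fun i _ => Finset.sum_congr rfl fun j _ => by ring
    rw [h1, Complex.re_sum]
    have h2 : ∀ i : Fin n, (∑ j, ((M i j : ℂ) * ((starRingEnd ℂ) (y i) * y j))).re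
        = ∑ j, M i j * (a i * a j + b i * b j) := by
      intro i
      rw [Complex.re_sum]
      refine Finset.sum_congr rfl fun j _ => ?_
      rw [Complex.re_ofReal_mul]
      simp [Complex.mul_re, ha, hb]
    simp only [h2]
    simp only [dotProduct, Matrix.mulVec, Finset.mul_sum]
    rw [← Finset.sum_add_distrib]
    refine Finset.sum_congr rfl fun i _ => ?_
    rw [← Finset.sum_add_distrib]
    refine Finset.sum_congr rfl fun j _ => by ring
  rw [key]
  have hab : a ≠ 0 ∨ b ≠ 0 := by
    by_contra hc
    push_neg at hc
    apply hy
    funext i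
    have h1 : a i = 0 := by rw [hc.1]; rfl
    have h2 : b i = 0 := by rw [hc.2]; rfl
    exact Complex.ext h1 h2
  have hsd := hM.posSemidef
  have hna : 0 ≤ a ⬝ᵥ (M *ᵥ a) := by simpa using (Matrix.posSemidef_iff_dotProduct_mulVec.mp hsd).2 a
  have hnb : 0 ≤ b ⬝ᵥ (M *ᵥ b) := by simpa using (Matrix.posSemidef_iff_dotProduct_mulVec.mp hsd).2 b
  rcases hab with h | h
  · have := hM.dotProduct_mulVec_pos h; simp only [star_trivial] at this; linarith
  · have := hM.dotProduct_mulVec_pos h; simp only [star_trivial] at this; linarith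

private lemma jhss_exists_eigen {n : ℕ} {M : Matrix (Fin n) (Fin n) ℂ} {k : ℂ}
    (hk : k ∈ spectrum ℂ M) : ∃ z, z ≠ 0 ∧ M *ᵥ z = k • z := by
  rw [spectrum.mem_iff] at hk
  by_contra hc
  push_neg at hc
  apply hk
  rw [← Matrix.mulVec_injective_iff_isUnit]
  intro x y hxy
  by_contra hne
  have hd : x - y ≠ 0 := sub_ne_zero.mpr hne
  have h0 : (algebraMap ℂ _ k - M) *ᵥ (x - y) = 0 := by
    rw [Matrix.mulVec_sub, hxy, sub_self]
  rw [Matrix.sub_mulVec, Algebra.algebraMap_eq_smul_one, Matrix.smul_mulVec,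
    Matrix.one_mulVec, sub_eq_zero] at h0
  exact hc _ hd h0.symm

private lemma jhss_conjT_map {n : ℕ} (M : Matrix (Fin n) (Fin n) ℝ) :
    (M.map Complex.ofReal)ᴴ = Mᵀ.map Complex.ofReal := by
  ext i j
  simp [Matrix.conjTranspose_apply, Matrix.map_apply, Complex.conj_ofReal]

private lemma jhss_map_mul {n : ℕ} (M N : Matrix (Fin n) (Fin n) ℝ) :
    (M * N).map Complex.ofReal = M.map Complex.ofReal * N.map Complex.ofReal := by
  ext i j
  simp [Matrix.mul_apply, Matrix.map_apply]

private lemma jhss_map_sub {n : ℕ} (M N : Matrix (Fin n) (Fin n) ℝ) :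
    (M - N).map Complex.ofReal = M.map Complex.ofReal - N.map Complex.ofReal := by
  ext i j
  simp [Matrix.map_apply]

private lemma jhss_map_one {n : ℕ} :
    (1 : Matrix (Fin n) (Fin n) ℝ).map Complex.ofReal = 1 := by
  ext i j
  simp [Matrix.map_apply, Matrix.one_apply]
  split <;> simp

private lemma jhss_quad {n : ℕ} (P : Matrix (Fin n) (Fin n) ℝ) (hP : Pᵀ = P) (y : Fin n → ℂ) :
    star ((P.map Complex.ofReal) *ᵥ y) ⬝ᵥ ((P.map Complex.ofReal) *ᵥ y)
      = star y ⬝ᵥ (((P * P).map Complex.ofReal) *ᵥ y) := by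
  rw [Matrix.star_mulVec, jhss_conjT_map, hP, Matrix.dotProduct_mulVec,
    Matrix.vecMul_vecMul, ← jhss_map_mul, ← Matrix.dotProduct_mulVec]

private lemma jhss_unitary_quad {n : ℕ} (Q : Matrix (Fin n) (Fin n) ℝ) (hQ : Qᵀ * Q = 1)
    (w : Fin n → ℂ) :
    star ((Q.map Complex.ofReal) *ᵥ w) ⬝ᵥ ((Q.map Complex.ofReal) *ᵥ w) = star w ⬝ᵥ w := by
  rw [Matrix.star_mulVec, jhss_conjT_map, Matrix.dotProduct_mulVec,
    Matrix.vecMul_vecMul, ← jhss_map_mul, hQ, jhss_map_one, Matrix.vecMul_one]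

/-- Convergence of the `J`-HSS iteration, skew-symmetric case: if `A, J` are invertible,
`Jᵀ = -J`, and the symmetric matrix `SJ` is positive definite (where `H` and `S` are the
`J`-symmetric and `J`-skew-symmetric parts of `A`), then `n` is even and for every
`α > 0` the matrices `H + αJ⁻¹` and `S + αJ⁻¹` are invertible and the iteration matrix
`T_α = (S + αJ⁻¹)⁻¹ (αJ⁻¹ − H) (H + αJ⁻¹)⁻¹ (αJ⁻¹ − S)` has spectral radius `< 1`. -/
theorem jHSS_convergence_skew (n : ℕ) (A J : Matrix (Fin n) (Fin n) ℝ)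
    (hA : IsUnit A) (hJ : IsUnit J) (hJt : Jᵀ = -J)
    (H S : Matrix (Fin n) (Fin n) ℝ)
    (hH : H = (1/2 : ℝ) • (A + J * Aᵀ * J⁻¹))
    (hS : S = (1/2 : ℝ) • (A - J * Aᵀ * J⁻¹))
    (hpd : (S * J).PosDef) :
    Even n ∧
    ∀ α : ℝ, 0 < α →
      IsUnit (H + α • J⁻¹) ∧ IsUnit (S + α • J⁻¹) ∧
      spectralRadius ℂ
        (((S + α • J⁻¹)⁻¹ * (α • J⁻¹ - H) * (H + α • J⁻¹)⁻¹ * (α • J⁻¹ - S)).map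
          Complex.ofReal) < 1 := by
  classical
  have hJd : IsUnit J.det := (Matrix.isUnit_iff_isUnit_det J).mp hJ
  have hJdne : J.det ≠ 0 := by
    intro h0
    rw [h0] at hJd
    exact (by simp : ¬ IsUnit (0:ℝ)) hJd
  constructor
  · -- Even n
    have h1 : J.det = (-1 : ℝ) ^ n * J.det := by
      conv_lhs => rw [← Matrix.det_transpose J]
      rw [hJt, Matrix.det_neg, Fintype.card_fin]
    have h2 : (-1 : ℝ) ^ n = 1 :=
      mul_right_cancel₀ hJdne (by rw [one_mul, ← h1])
    exact (neg_one_pow_eq_one_iff_even (by norm_num : (-1:ℝ) ≠ 1)).mp h2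
  intro α hα
  set B : Matrix (Fin n) (Fin n) ℝ := α • (1 : Matrix (Fin n) (Fin n) ℝ) with hB
  set Hp : Matrix (Fin n) (Fin n) ℝ := H * J with hHp
  set Sp : Matrix (Fin n) (Fin n) ℝ := S * J with hSp
  -- expanded forms
  have hHpE : Hp = (1/2 : ℝ) • (A * J + J * Aᵀ) := by
    rw [hHp, hH, smul_mul_assoc, add_mul, Matrix.nonsing_inv_mul_cancel_right _ _ hJd]
  have hSpE : Sp = (1/2 : ℝ) • (A * J - J * Aᵀ) := by
    rw [hSp, hS, smul_mul_assoc, sub_mul, Matrix.nonsing_inv_mul_cancel_right _ _ hJd]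
  have hHpT : Hpᵀ = -Hp := by
    rw [hHpE, Matrix.transpose_smul, Matrix.transpose_add, Matrix.transpose_mul,
      Matrix.transpose_mul, Matrix.transpose_transpose, hJt]
    simp only [Matrix.neg_mul, Matrix.mul_neg]
    module
  have hSpT : Spᵀ = Sp := by
    have h := hpd.1
    rwa [← Matrix.conjTranspose_eq_transpose_of_trivial]
  have hBt : Bᵀ = B := by rw [hB, Matrix.transpose_smul, Matrix.transpose_one]
  have htBpH : (B + Hp)ᵀ = B - Hp := by
    rw [Matrix.transpose_add, hBt, hHpT, ← sub_eq_add_neg]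
  have htBmH : (B - Hp)ᵀ = B + Hp := by
    rw [Matrix.transpose_sub, hBt, hHpT, sub_neg_eq_add]
  have htBpS : (B + Sp)ᵀ = B + Sp := by rw [Matrix.transpose_add, hBt, hSpT]
  have htBmS : (B - Sp)ᵀ = B - Sp := by rw [Matrix.transpose_sub, hBt, hSpT]
  -- invertibility
  have hBpH : IsUnit (B + Hp) := by
    refine jhss_isUnit_of_dot_pos _ (fun v hv => ?_)
    have h0 : (B + Hp) *ᵥ v = α • v + Hp *ᵥ v := by
      rw [Matrix.add_mulVec, hB, Matrix.smul_mulVec, Matrix.one_mulVec]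
    rw [h0, dotProduct_add, dotProduct_smul, jhss_skew_dot hHpT, add_zero,
      smul_eq_mul]
    exact mul_pos hα (jhss_dot_self_pos hv)
  have hBmH : IsUnit (B - Hp) := by
    refine jhss_isUnit_of_dot_pos _ (fun v hv => ?_)
    have hmT : (-Hp)ᵀ = -(-Hp) := by rw [Matrix.transpose_neg, hHpT, neg_neg]
    have h0 : (B - Hp) *ᵥ v = α • v + (-Hp) *ᵥ v := by
      rw [sub_eq_add_neg, Matrix.add_mulVec, hB, Matrix.smul_mulVec, Matrix.one_mulVec]
    rw [h0, dotProduct_add, dotProduct_smul, jhss_skew_dot hmT, add_zero,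
      smul_eq_mul]
    exact mul_pos hα (jhss_dot_self_pos hv)
  have hBpS : IsUnit (B + Sp) := by
    refine jhss_isUnit_of_dot_pos _ (fun v hv => ?_)
    have h0 : (B + Sp) *ᵥ v = α • v + Sp *ᵥ v := by
      rw [Matrix.add_mulVec, hB, Matrix.smul_mulVec, Matrix.one_mulVec]
    have h1 := hpd.dotProduct_mulVec_pos hv
    rw [star_trivial] at h1
    rw [h0, dotProduct_add, dotProduct_smul, smul_eq_mul]
    have := mul_pos hα (jhss_dot_self_pos hv)
    linarith
  have dBpH := (Matrix.isUnit_iff_isUnit_det _).mp hBpH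
  have dBmH := (Matrix.isUnit_iff_isUnit_det _).mp hBmH
  have dBpS := (Matrix.isUnit_iff_isUnit_det _).mp hBpS
  have hJinv : IsUnit (J⁻¹) := by
    rw [Matrix.isUnit_iff_isUnit_det, Matrix.det_nonsing_inv, Ring.inverse_eq_inv']
    exact isUnit_iff_ne_zero.mpr (inv_ne_zero hJdne)
  -- the key factorization identities
  have e1 : H + α • J⁻¹ = (B + Hp) * J⁻¹ := by
    rw [hB, hHp, add_mul, smul_mul_assoc, one_mul,
      Matrix.mul_nonsing_inv_cancel_right _ _ hJd, add_comm]
  have e2 : S + α • J⁻¹ = (B + Sp) * J⁻¹ := by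
    rw [hB, hSp, add_mul, smul_mul_assoc, one_mul,
      Matrix.mul_nonsing_inv_cancel_right _ _ hJd, add_comm]
  have e3 : α • J⁻¹ - H = (B - Hp) * J⁻¹ := by
    rw [hB, hHp, sub_mul, smul_mul_assoc, one_mul,
      Matrix.mul_nonsing_inv_cancel_right _ _ hJd]
  have e4 : α • J⁻¹ - S = (B - Sp) * J⁻¹ := by
    rw [hB, hSp, sub_mul, smul_mul_assoc, one_mul,
      Matrix.mul_nonsing_inv_cancel_right _ _ hJd]
  refine ⟨by rw [e1]; exact hBpH.mul hJinv, by rw [e2]; exact hBpS.mul hJinv, ?_⟩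
  have hT : (S + α • J⁻¹)⁻¹ * (α • J⁻¹ - H) * (H + α • J⁻¹)⁻¹ * (α • J⁻¹ - S)
      = (J * (B + Sp)⁻¹) * ((B - Hp) * ((B + Hp)⁻¹ * ((B - Sp) * J⁻¹))) := by
    rw [e1, e2, e3, e4, Matrix.mul_inv_rev, Matrix.mul_inv_rev,
      Matrix.nonsing_inv_nonsing_inv _ hJd]
    simp only [Matrix.mul_assoc]
    rw [Matrix.nonsing_inv_mul_cancel_left _ _ hJd]
  have hDC : ((B - Hp) * ((B + Hp)⁻¹ * ((B - Sp) * J⁻¹))) * (J * (B + Sp)⁻¹)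
      = ((B - Hp) * (B + Hp)⁻¹) * ((B - Sp) * (B + Sp)⁻¹) := by
    simp only [Matrix.mul_assoc]
    rw [Matrix.nonsing_inv_mul_cancel_left _ _ hJd]
  -- Q is orthogonal
  have hBmul : ∀ M : Matrix (Fin n) (Fin n) ℝ, B * M = α • M := fun M => by
    rw [hB, smul_mul_assoc, one_mul]
  have hmulB : ∀ M : Matrix (Fin n) (Fin n) ℝ, M * B = α • M := fun M => by
    rw [hB, mul_smul_comm, mul_one]
  have hcomm : (B + Hp) * (B - Hp) = (B - Hp) * (B + Hp) := by
    simp only [add_mul, mul_add, sub_mul, mul_sub, hBmul, hmulB]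
    module
  have hQtQ : ((B - Hp) * (B + Hp)⁻¹)ᵀ * ((B - Hp) * (B + Hp)⁻¹) = 1 := by
    have hQT : ((B - Hp) * (B + Hp)⁻¹)ᵀ = (B - Hp)⁻¹ * (B + Hp) := by
      rw [Matrix.transpose_mul, Matrix.transpose_nonsing_inv, htBpH, htBmH]
    rw [hQT]
    calc (B - Hp)⁻¹ * (B + Hp) * ((B - Hp) * (B + Hp)⁻¹)
        = (B - Hp)⁻¹ * (((B + Hp) * (B - Hp)) * (B + Hp)⁻¹) := by
          simp only [Matrix.mul_assoc]
      _ = (B - Hp)⁻¹ * (((B - Hp) * (B + Hp)) * (B + Hp)⁻¹) := by rw [hcomm]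
      _ = (B - Hp)⁻¹ * ((B - Hp) * ((B + Hp) * (B + Hp)⁻¹)) := by
          simp only [Matrix.mul_assoc]
      _ = 1 := by
          rw [Matrix.mul_nonsing_inv _ dBpH, mul_one, Matrix.nonsing_inv_mul _ dBmH]
  -- the square identity
  have hsq : (B + Sp) * (B + Sp) - (B - Sp) * (B - Sp) = (4*α) • Sp := by
    simp only [add_mul, mul_add, sub_mul, mul_sub, hBmul, hmulB]
    module
  have hpd4 : ((4*α) • Sp).PosDef := by
    refine Matrix.PosDef.of_dotProduct_mulVec_pos ?_ ?_
    · show ((4*α) • Sp)ᴴ = (4*α) • Sp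
      rw [Matrix.conjTranspose_smul, hpd.1, star_trivial]
    · intro x hx
      have h1 := hpd.dotProduct_mulVec_pos hx
      rw [Matrix.smul_mulVec, dotProduct_smul, smul_eq_mul]
      have : (0:ℝ) < 4*α := by linarith
      rw [star_trivial] at h1 ⊢
      exact mul_pos this h1
  have hpd1 : (1 : Matrix (Fin n) (Fin n) ℝ).PosDef := by
    refine Matrix.PosDef.of_dotProduct_mulVec_pos Matrix.isHermitian_one (fun x hx => ?_)
    simpa [Matrix.one_mulVec] using jhss_dot_self_pos hx
  -- spectral bound for each element of the spectrum
  set Tc := (((S + α • J⁻¹)⁻¹ * (α • J⁻¹ - H) * (H + α • J⁻¹)⁻¹ * (α • J⁻¹ - S)).map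
      Complex.ofReal) with hTc
  have hspec : ∀ k ∈ spectrum ℂ Tc, (‖k‖₊ : ENNReal) < 1 := by
    intro k hk
    by_cases hk0 : k = 0
    · simp [hk0]
    have hk' : k ∈ spectrum ℂ
        ((((B - Hp) * (B + Hp)⁻¹) * ((B - Sp) * (B + Sp)⁻¹)).map Complex.ofReal) := by
      have h1 : Tc = (J * (B + Sp)⁻¹).map Complex.ofReal
          * ((B - Hp) * ((B + Hp)⁻¹ * ((B - Sp) * J⁻¹))).map Complex.ofReal := by
        rw [hTc, hT, jhss_map_mul]
      have h2 : k ∈ spectrum ℂ ((J * (B + Sp)⁻¹).map Complex.ofReal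
          * ((B - Hp) * ((B + Hp)⁻¹ * ((B - Sp) * J⁻¹))).map Complex.ofReal) \ {0} :=
        ⟨h1 ▸ hk, hk0⟩
      rw [spectrum.nonzero_mul_comm, ← jhss_map_mul, hDC] at h2
      exact h2.1
    obtain ⟨z, hz, hvz⟩ := jhss_exists_eigen hk'
    set y : Fin n → ℂ := ((B + Sp)⁻¹.map Complex.ofReal) *ᵥ z with hy
    set w : Fin n → ℂ := ((B - Sp).map Complex.ofReal) *ᵥ y with hw
    have hzy : ((B + Sp).map Complex.ofReal) *ᵥ y = z := by
      rw [hy, Matrix.mulVec_mulVec, ← jhss_map_mul, Matrix.mul_nonsing_inv _ dBpS,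
        jhss_map_one, Matrix.one_mulVec]
    have hRz : (((B - Sp) * (B + Sp)⁻¹).map Complex.ofReal) *ᵥ z = w := by
      rw [jhss_map_mul, ← Matrix.mulVec_mulVec, ← hy, ← hw]
    have hQw : (((B - Hp) * (B + Hp)⁻¹).map Complex.ofReal) *ᵥ w = k • z := by
      rw [← hRz, Matrix.mulVec_mulVec, ← jhss_map_mul]
      exact hvz
    have hy0 : y ≠ 0 := by
      intro h0
      apply hz
      rw [← hzy, h0, Matrix.mulVec_zero]
    -- norm identities
    have hQnorm : star (k • z) ⬝ᵥ (k • z) = star w ⬝ᵥ w := by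
      rw [← hQw]
      exact jhss_unitary_quad _ hQtQ w
    have hzz : star z ⬝ᵥ z = star y ⬝ᵥ ((((B + Sp) * (B + Sp)).map Complex.ofReal) *ᵥ y) := by
      rw [← hzy]
      exact jhss_quad _ htBpS y
    have hww : star w ⬝ᵥ w = star y ⬝ᵥ ((((B - Sp) * (B - Sp)).map Complex.ofReal) *ᵥ y) := by
      rw [hw]
      exact jhss_quad _ htBmS y
    have hdiff : star z ⬝ᵥ z - star w ⬝ᵥ w
        = star y ⬝ᵥ ((((4*α) • Sp).map Complex.ofReal) *ᵥ y) := by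
      rw [hzz, hww, ← hsq, jhss_map_sub, Matrix.sub_mulVec, dotProduct_sub]
    have hpos4 : 0 < (star y ⬝ᵥ ((((4*α) • Sp).map Complex.ofReal) *ᵥ y)).re :=
      jhss_posdef_map_re hpd4 y hy0
    have hzpos : 0 < (star z ⬝ᵥ z).re := by
      have h := jhss_posdef_map_re hpd1 z hz
      rw [jhss_map_one, Matrix.one_mulVec] at h
      exact h
    have hkk : Complex.normSq k * (star z ⬝ᵥ z).re = (star w ⬝ᵥ w).re := by
      have h1 : star (k • z) ⬝ᵥ (k • z) = (Complex.normSq k : ℂ) * (star z ⬝ᵥ z) := by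
        rw [star_smul, smul_dotProduct, dotProduct_smul, smul_eq_mul,
          smul_eq_mul, ← mul_assoc]
        congr 1
        rw [Complex.star_def, mul_comm, Complex.mul_conj]
      have h2 := hQnorm
      rw [h1] at h2
      have h3 := congrArg Complex.re h2
      rwa [Complex.re_ofReal_mul] at h3
    have hlt : (star w ⬝ᵥ w).re < (star z ⬝ᵥ z).re := by
      have h4 := congrArg Complex.re hdiff
      rw [Complex.sub_re] at h4
      linarith
    have hnsq : Complex.normSq k < 1 := by
      rw [← one_mul ((star z ⬝ᵥ z).re)] at hlt
      nth_rewrite 1 [← hkk] at hlt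
      exact lt_of_mul_lt_mul_right hlt hzpos.le
    have hknorm : ‖k‖ < 1 := by
      have h5 := Complex.sq_norm k
      nlinarith [norm_nonneg k]
    have h6 : ‖k‖₊ < 1 := by
      rw [← NNReal.coe_lt_coe]
      simpa using hknorm
    exact_mod_cast h6
  -- conclude via finiteness of the spectrum
  have hfin := Matrix.finite_spectrum Tc
  rcases (spectrum ℂ Tc).eq_empty_or_nonempty with he | hne
  · rw [spectralRadius, he]
    simp
  · obtain ⟨b, hb, hmax⟩ := Set.exists_max_image _ (fun k : ℂ => (‖k‖₊ : ENNReal)) hfin hne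
    refine lt_of_le_of_lt ?_ (hspec b hb)
    rw [spectralRadius]
    exact iSup₂_le fun k hk => hmax k hk
end

section
/- Let P be a symmetric positive definite real n×n matrix with eigenvalues λ₁,…,λₙ, and let λ_min and λ_max be the smallest and largest eigenvalues. Then the function g(α) = max over 1 ≤ i ≤ n of |α − λᵢ|/(α + λᵢ), defined for α > 0, is minimized at α* = √(λ_min λ_max); that is, g(√(λ_min λ_max)) ≤ g(α) for every α > 0. -/
/-!
Write `s = √(λ_min λ_max)` and `g(α, x) = |α - x| / (α + x)`. For positive reals,
`(a - b) / (a + b) ≤ (c - d) / (c + d)` is equivalent to `a d ≤ c b`, which turns each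
comparison of such quotients into a comparison of products. On `[λ_min, λ_max]` the function
`g(s, ·)` is maximal at both endpoints, with the common value `(s - λ_min) / (s + λ_min)`. For
any other `α > 0` this value is exceeded at one endpoint: at `λ_max` if `α ≤ s`, at `λ_min` if
`s ≤ α`.
-/

noncomputable def hssFactor (α x : ℝ) : ℝ := |α - x| / (α + x)

lemma hssFactor_comm (α x : ℝ) : hssFactor α x = hssFactor x α := by
  rw [hssFactor, hssFactor, abs_sub_comm, add_comm]

lemma hssFactor_of_le {α x : ℝ} (h : x ≤ α) : hssFactor α x = (α - x) / (α + x) := by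
  rw [hssFactor, abs_of_nonneg (sub_nonneg.mpr h)]

lemma sub_div_add_le_sub_div_add_iff {a b c d : ℝ} (ha : 0 < a) (hb : 0 < b) (hc : 0 < c)
    (hd : 0 < d) : (a - b) / (a + b) ≤ (c - d) / (c + d) ↔ a * d ≤ c * b := by
  rw [div_le_div_iff₀ (by positivity) (by positivity)]
  constructor <;> intro h <;> nlinarith

lemma le_sqrt_mul_of_le {m M : ℝ} (hm : 0 ≤ m) (hmM : m ≤ M) : m ≤ √(m * M) :=
  Real.le_sqrt_of_sq_le (by nlinarith)

lemma sqrt_mul_le_of_le {m M : ℝ} (hm : 0 ≤ m) (hmM : m ≤ M) : √(m * M) ≤ M :=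
  Real.sqrt_le_iff.mpr ⟨hm.trans hmM, by nlinarith⟩

lemma hssFactor_sqrt_mul_le {m M x : ℝ} (hm : 0 < m) (hmx : m ≤ x) (hxM : x ≤ M) :
    hssFactor √(m * M) x ≤ hssFactor √(m * M) m := by
  set s := √(m * M)
  have hmM : m ≤ M := hmx.trans hxM
  have hs0 : 0 < s := Real.sqrt_pos.mpr (by nlinarith)
  have hx : 0 < x := hm.trans_le hmx
  have hss : s * s = m * M := Real.mul_self_sqrt (by nlinarith)
  rw [hssFactor_of_le (le_sqrt_mul_of_le hm.le hmM)]
  rcases le_total x s with hxs | hsx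
  · rw [hssFactor_of_le hxs, sub_div_add_le_sub_div_add_iff hs0 hx hs0 hm]
    exact mul_le_mul_of_nonneg_left hmx hs0.le
  · rw [hssFactor_comm, hssFactor_of_le hsx, sub_div_add_le_sub_div_add_iff hx hs0 hs0 hm, hss,
      mul_comm m]
    exact mul_le_mul_of_nonneg_right hxM hm.le

lemma hssFactor_sqrt_mul_le_max {m M α : ℝ} (hm : 0 < m) (hmM : m ≤ M) (hα : 0 < α) :
    hssFactor √(m * M) m ≤ max (hssFactor α m) (hssFactor α M) := by
  set s := √(m * M)
  have hs0 : 0 < s := Real.sqrt_pos.mpr (by nlinarith)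
  have hms : m ≤ s := le_sqrt_mul_of_le hm.le hmM
  have hsM : s ≤ M := sqrt_mul_le_of_le hm.le hmM
  have hss : s * s = m * M := Real.mul_self_sqrt (by nlinarith)
  rw [hssFactor_of_le hms]
  rcases le_total α s with hαs | hsα
  · refine le_max_of_le_right ?_
    rw [hssFactor_comm, hssFactor_of_le (hαs.trans hsM),
      sub_div_add_le_sub_div_add_iff hs0 hm (hm.trans_le hmM) hα, mul_comm M, ← hss]
    exact mul_le_mul_of_nonneg_left hαs hs0.le
  · refine le_max_of_le_left ?_
    rw [hssFactor_of_le (hms.trans hsα), sub_div_add_le_sub_div_add_iff hs0 hm hα hm]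
    exact mul_le_mul_of_nonneg_right hsα hm.le

theorem iSup_hssFactor_sqrt_le {ι : Type*} [Finite ι] (e : ι → ℝ) (he : ∀ i, 0 < e i)
    {α : ℝ} (hα : 0 < α) :
    ⨆ i, hssFactor √((⨅ j, e j) * ⨆ j, e j) (e i) ≤ ⨆ i, hssFactor α (e i) := by
  rcases isEmpty_or_nonempty ι with _ | _
  · simp only [Real.iSup_of_isEmpty, le_refl]
  obtain ⟨i₀, hi₀⟩ : ∃ i, e i = ⨅ j, e j := exists_eq_ciInf_of_finite
  obtain ⟨i₁, hi₁⟩ : ∃ i, e i = ⨆ j, e j := exists_eq_ciSup_of_finite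
  have hbdd : BddAbove (Set.range fun i ↦ hssFactor α (e i)) := (Set.finite_range _).bddAbove
  refine ciSup_le fun i ↦ ?_
  calc hssFactor √((⨅ j, e j) * ⨆ j, e j) (e i)
      ≤ hssFactor √((⨅ j, e j) * ⨆ j, e j) (⨅ j, e j) :=
        hssFactor_sqrt_mul_le (hi₀ ▸ he i₀) (ciInf_le (Set.finite_range e).bddBelow i)
          (le_ciSup (Set.finite_range e).bddAbove i)
    _ ≤ max (hssFactor α (⨅ j, e j)) (hssFactor α (⨆ j, e j)) :=
        hssFactor_sqrt_mul_le_max (hi₀ ▸ he i₀)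
          (ciInf_le_ciSup (Set.finite_range e).bddBelow (Set.finite_range e).bddAbove) hα
    _ ≤ ⨆ i, hssFactor α (e i) := by
        rw [← hi₀, ← hi₁]
        exact max_le (le_ciSup hbdd i₀) (le_ciSup hbdd i₁)

theorem optimal_hss_parameter_general (n : ℕ)
    (P : Matrix (Fin n) (Fin n) ℝ) (hP : P.PosDef) :
    ∀ α : ℝ, 0 < α →
      (⨆ i : Fin n,
          |Real.sqrt ((⨅ j : Fin n, hP.1.eigenvalues j) * (⨆ j : Fin n, hP.1.eigenvalues j))
              - hP.1.eigenvalues i| /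
            (Real.sqrt ((⨅ j : Fin n, hP.1.eigenvalues j) * (⨆ j : Fin n, hP.1.eigenvalues j))
              + hP.1.eigenvalues i))
        ≤ ⨆ i : Fin n, |α - hP.1.eigenvalues i| / (α + hP.1.eigenvalues i) :=
  fun _ hα ↦ iSup_hssFactor_sqrt_le _ hP.eigenvalues_pos hα

/-- For a symmetric positive definite `P` with eigenvalues `λᵢ`, the function
`g(α) = max_i |α − λᵢ|/(α + λᵢ)` (for `α > 0`) is minimized at
`α* = √(λ_min λ_max)`. -/
theorem optimal_hss_parameter (n : ℕ) (hn : 0 < n)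
    (P : Matrix (Fin n) (Fin n) ℝ) (hP : P.PosDef) :
    ∀ α : ℝ, 0 < α →
      (⨆ i : Fin n,
          |Real.sqrt ((⨅ j : Fin n, hP.1.eigenvalues j) * (⨆ j : Fin n, hP.1.eigenvalues j))
              - hP.1.eigenvalues i| /
            (Real.sqrt ((⨅ j : Fin n, hP.1.eigenvalues j) * (⨆ j : Fin n, hP.1.eigenvalues j))
              + hP.1.eigenvalues i))
        ≤ ⨆ i : Fin n, |α - hP.1.eigenvalues i| / (α + hP.1.eigenvalues i) :=
  optimal_hss_parameter_general n P hP
end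

section
/- (Kellogg's lemma.) Let A be a real n×n matrix such that A + Aᵀ is positive definite, and let α > 0. Then αI + A is invertible and the spectral (operator 2-) norm of (αI − A)(αI + A)⁻¹ is strictly less than 1. -/
open Matrix

lemma kellogg_dot (n : ℕ) (A : Matrix (Fin n) (Fin n) ℝ)
    (hA : (A + Aᵀ).PosDef) (α : ℝ) (hα : 0 < α) (x : Fin n → ℝ) (hx : x ≠ 0) :
    ((α • (1 : Matrix (Fin n) (Fin n) ℝ) - A) *ᵥ x) ⬝ᵥ ((α • (1 : Matrix (Fin n) (Fin n) ℝ) - A) *ᵥ x)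
      < ((α • (1 : Matrix (Fin n) (Fin n) ℝ) + A) *ᵥ x) ⬝ᵥ ((α • (1 : Matrix (Fin n) (Fin n) ℝ) + A) *ᵥ x) := by
  have hpos : 0 < x ⬝ᵥ (A + Aᵀ) *ᵥ x := by simpa using (posDef_iff_dotProduct_mulVec.mp hA).2 hx
  have hsym : x ⬝ᵥ Aᵀ *ᵥ x = x ⬝ᵥ A *ᵥ x := by
    rw [dotProduct_mulVec, vecMul_transpose, dotProduct_comm]
  have hx2 : 0 < x ⬝ᵥ A *ᵥ x := by
    rw [add_mulVec, dotProduct_add, hsym] at hpos; linarith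
  have h1 : (α • (1 : Matrix (Fin n) (Fin n) ℝ)) *ᵥ x = α • x := by
    rw [smul_mulVec, one_mulVec]
  have hcomm : (A *ᵥ x) ⬝ᵥ (α • x) = (α • x) ⬝ᵥ (A *ᵥ x) := dotProduct_comm _ _
  have hax : (α • x) ⬝ᵥ (A *ᵥ x) = α * (x ⬝ᵥ A *ᵥ x) := smul_dotProduct α x (A *ᵥ x)
  rw [add_mulVec, sub_mulVec, h1]
  rw [dotProduct_add, dotProduct_sub, add_dotProduct, add_dotProduct, sub_dotProduct,
    sub_dotProduct, hcomm, hax]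
  nlinarith [mul_pos hα hx2]

lemma kellogg_norm (n : ℕ) (A : Matrix (Fin n) (Fin n) ℝ)
    (hA : (A + Aᵀ).PosDef) (α : ℝ) (hα : 0 < α) (v : EuclideanSpace ℝ (Fin n)) (hv : v ≠ 0) :
    ‖Matrix.toEuclideanCLM (𝕜 := ℝ) (α • (1 : Matrix (Fin n) (Fin n) ℝ) - A) v‖
      < ‖Matrix.toEuclideanCLM (𝕜 := ℝ) (α • (1 : Matrix (Fin n) (Fin n) ℝ) + A) v‖ := by
  have hsq : ∀ w : EuclideanSpace ℝ (Fin n),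
      ‖w‖ ^ 2 = (WithLp.equiv 2 _ w) ⬝ᵥ (WithLp.equiv 2 _ w) := by
    intro w
    rw [← real_inner_self_eq_norm_sq]
    simp [PiLp.inner_apply, dotProduct, RCLike.inner_apply, WithLp.equiv]
    rw [EuclideanSpace.norm_eq, Real.sq_sqrt (Finset.sum_nonneg fun i _ => sq_nonneg _)]
    simp [sq]
  have happ : ∀ M : Matrix (Fin n) (Fin n) ℝ,
      WithLp.equiv 2 _ (Matrix.toEuclideanCLM (𝕜 := ℝ) M v) = M *ᵥ (WithLp.equiv 2 _ v) := by
    intro M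
    exact ofLp_toEuclideanCLM M v
  have hx : (WithLp.equiv 2 _ v : Fin n → ℝ) ≠ 0 := by
    simpa using (WithLp.equiv 2 _).injective.ne_iff.mpr hv
  have key := kellogg_dot n A hA α hα _ hx
  refine lt_of_pow_lt_pow_left₀ 2 (norm_nonneg _) ?_
  rw [hsq, hsq, happ, happ]
  exact key

/-- Kellogg's lemma: if `A + Aᵀ` is positive definite and `α > 0`, then `αI + A` is
invertible and the spectral norm of `(αI − A)(αI + A)⁻¹` is strictly less than 1. -/
theorem kellogg_lemma (n : ℕ) (A : Matrix (Fin n) (Fin n) ℝ)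
    (hA : (A + Aᵀ).PosDef) (α : ℝ) (hα : 0 < α) :
    IsUnit (α • (1 : Matrix (Fin n) (Fin n) ℝ) + A) ∧
    ‖Matrix.toEuclideanCLM (𝕜 := ℝ)
        ((α • (1 : Matrix (Fin n) (Fin n) ℝ) - A) *
          (α • (1 : Matrix (Fin n) (Fin n) ℝ) + A)⁻¹)‖ < 1 := by
  set B := α • (1 : Matrix (Fin n) (Fin n) ℝ) + A with hB
  set C := α • (1 : Matrix (Fin n) (Fin n) ℝ) - A with hC
  have hunit : IsUnit B := by
    rw [← Matrix.mulVec_injective_iff_isUnit]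
    intro x y hxy
    by_contra hne
    have hz : x - y ≠ 0 := sub_ne_zero.mpr hne
    have hBz : B *ᵥ (x - y) = 0 := by
      rw [Matrix.mulVec_sub, hxy, sub_self]
    have := kellogg_dot n A hA α hα (x - y) hz
    rw [hBz] at this
    simp only [dotProduct_zero] at this
    have h0 : (0:ℝ) ≤ (C *ᵥ (x - y)) ⬝ᵥ (C *ᵥ (x - y)) :=
      Finset.sum_nonneg fun i _ => mul_self_nonneg _
    exact absurd this (not_lt.mpr h0)
  refine ⟨hunit, ?_⟩
  have hdet : IsUnit B.det := (Matrix.isUnit_iff_isUnit_det B).mp hunit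
  have hBBinv : B * B⁻¹ = 1 := Matrix.mul_nonsing_inv B hdet
  set T := Matrix.toEuclideanCLM (𝕜 := ℝ) (C * B⁻¹) with hT
  have hkey : ∀ y : EuclideanSpace ℝ (Fin n), y ≠ 0 → ‖T y‖ < ‖y‖ := by
    intro y hy
    set x := Matrix.toEuclideanCLM (𝕜 := ℝ) B⁻¹ y with hxdef
    have hBx : Matrix.toEuclideanCLM (𝕜 := ℝ) B x = y := by
      rw [hxdef, ← ContinuousLinearMap.comp_apply, ← ContinuousLinearMap.mul_def,
        ← _root_.map_mul, hBBinv, _root_.map_one, ContinuousLinearMap.one_apply]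
    have hxne : x ≠ 0 := by
      intro h
      rw [h, map_zero] at hBx
      exact hy hBx.symm
    have hTy : T y = Matrix.toEuclideanCLM (𝕜 := ℝ) C x := by
      rw [hT, _root_.map_mul, ContinuousLinearMap.mul_apply, hxdef]
    rw [hTy, ← hBx]
    exact kellogg_norm n A hA α hα x hxne
  by_cases hn : n = 0
  · subst hn
    have : T = 0 := by
      ext x i
      exact absurd i.2 (by omega)
    rw [this, norm_zero]; norm_num
  · haveI : Nontrivial (EuclideanSpace ℝ (Fin n)) := by
      refine nontrivial_of_ne (EuclideanSpace.single (⟨0, Nat.pos_of_ne_zero hn⟩ : Fin n) (1:ℝ)) 0 ?_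
      intro h
      have h2 := congrArg norm h
      rw [EuclideanSpace.norm_single, norm_zero] at h2
      norm_num at h2
    obtain ⟨x₀, hx₀mem, hmax⟩ :=
      (isCompact_sphere (0 : EuclideanSpace ℝ (Fin n)) 1).exists_isMaxOn
        (NormedSpace.sphere_nonempty.mpr zero_le_one)
        (T.continuous.norm.continuousOn)
    have hx₀norm : ‖x₀‖ = 1 := by simpa using hx₀mem
    have hx₀ne : x₀ ≠ 0 := by
      intro h; rw [h, norm_zero] at hx₀norm; norm_num at hx₀norm
    have hTle : ‖T‖ ≤ ‖T x₀‖ := by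
      refine T.opNorm_le_bound (norm_nonneg _) fun x => ?_
      rcases eq_or_ne x 0 with rfl | hx
      · simp
      · have hxs : (‖x‖⁻¹ • x) ∈ Metric.sphere (0 : EuclideanSpace ℝ (Fin n)) 1 := by
          simp [norm_smul, abs_of_nonneg (inv_nonneg.mpr (norm_nonneg x)),
            inv_mul_cancel₀ (norm_ne_zero_iff.mpr hx)]
        have := hmax hxs
        simp only [Set.mem_setOf_eq, _root_.map_smul, norm_smul, norm_inv, norm_norm] at this
        have hxpos : 0 < ‖x‖ := norm_pos_iff.mpr hx
        calc ‖T x‖ = ‖x‖ * (‖x‖⁻¹ * ‖T x‖) := by field_simp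
          _ ≤ ‖x‖ * ‖T x₀‖ := by
              exact mul_le_mul_of_nonneg_left this (le_of_lt hxpos)
          _ = ‖T x₀‖ * ‖x‖ := mul_comm _ _
    calc ‖T‖ ≤ ‖T x₀‖ := hTle
      _ < ‖x₀‖ := hkey x₀ hx₀ne
      _ = 1 := hx₀norm
end

section
/- Let A be a real n×n matrix with A + Aᵀ positive definite, write A = L0 + D + U0 with L0 strictly lower triangular, D diagonal, U0 strictly upper triangular, and set U = D + U0 + L0ᵀ and S = L0 − L0ᵀ, so that A = U + S with U upper triangular and S skew-symmetric and U + Uᵀ = A + Aᵀ. Then for every α > 0 the matrices αI + U and αI + S are invertible and the iteration matrix T_α = (αI + S)⁻¹(αI − U)(αI + U)⁻¹(αI − S) of the triangular and skew-symmetric splitting (STS) iteration has spectral radius strictly less than 1. -/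
open Matrix

namespace STSAux

variable {n : ℕ}

/-- The squared Euclidean norm of a complex vector, as a real number. -/
noncomputable def Nq (v : Fin n → ℂ) : ℝ := (star v ⬝ᵥ v).re

lemma Nq_eq (v : Fin n → ℂ) : Nq v = ∑ i, Complex.normSq (v i) := by
  unfold Nq
  simp only [dotProduct, Pi.star_apply, Complex.re_sum]
  exact Finset.sum_congr rfl fun i _ => by
    simp [Complex.normSq_apply, Complex.mul_re]

lemma Nq_nonneg (v : Fin n → ℂ) : 0 ≤ Nq v := by
  rw [Nq_eq]; exact Finset.sum_nonneg fun i _ => Complex.normSq_nonneg _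

lemma Nq_pos {v : Fin n → ℂ} (hv : v ≠ 0) : 0 < Nq v := by
  rcases (Nq_nonneg v).lt_or_eq with h | h
  · exact h
  · exfalso; apply hv
    funext i
    have h0 := (Finset.sum_eq_zero_iff_of_nonneg
      (fun i _ => Complex.normSq_nonneg (v i))).1 (by rw [← Nq_eq, ← h])
    exact Complex.normSq_eq_zero.1 (h0 i (Finset.mem_univ i))

lemma Nq_smul (μ : ℂ) (u : Fin n → ℂ) : Nq (μ • u) = Complex.normSq μ * Nq u := by
  unfold Nq
  have : (star (μ • u) ⬝ᵥ (μ • u)) = (Complex.normSq μ : ℂ) * (star u ⬝ᵥ u) := by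
    simp only [star_smul, smul_dotProduct, dotProduct_smul, smul_eq_mul, RCLike.star_def]
    rw [← mul_assoc]
    norm_cast
    rw [Complex.mul_conj]
  rw [this]
  simp [Complex.mul_re]

/-- Real part of the Hermitian form attached to a real matrix on a complex vector. -/
lemma re_form (M : Matrix (Fin n) (Fin n) ℝ) (w : Fin n → ℂ) :
    (star w ⬝ᵥ (M.map Complex.ofReal).mulVec w).re
    = (fun i => (w i).re) ⬝ᵥ M.mulVec (fun i => (w i).re)
      + (fun i => (w i).im) ⬝ᵥ M.mulVec (fun i => (w i).im) := by
  simp only [dotProduct, mulVec, Matrix.map_apply, Pi.star_apply, Finset.mul_sum,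
    Complex.re_sum, ← Finset.sum_add_distrib]
  apply Finset.sum_congr rfl; intro i _
  apply Finset.sum_congr rfl; intro j _
  simp only [Complex.mul_re, Complex.mul_im, Complex.ofReal_re, Complex.ofReal_im,
    RCLike.star_def, Complex.conj_re, Complex.conj_im]
  ring

lemma star_dot_comm (u w : Fin n → ℂ) : star w ⬝ᵥ u = star (star u ⬝ᵥ w) := by
  simp [dotProduct, star_sum, mul_comm]

/-- The fundamental identity:
`‖(αI + C)v‖² − ‖(αI − C)v‖² = 4 α Re⟨v, C v⟩`. -/
lemma diff_identity (C : Matrix (Fin n) (Fin n) ℂ) (α : ℝ) (v : Fin n → ℂ) :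
    Nq (((α:ℂ) • (1:Matrix (Fin n) (Fin n) ℂ) + C).mulVec v)
      - Nq (((α:ℂ) • (1:Matrix (Fin n) (Fin n) ℂ) - C).mulVec v)
    = 4 * α * (star v ⬝ᵥ C.mulVec v).re := by
  set c := C.mulVec v with hc
  have hp : ((α:ℂ) • (1:Matrix (Fin n) (Fin n) ℂ) + C).mulVec v = (α:ℂ) • v + c := by
    simp [Matrix.add_mulVec, Matrix.smul_mulVec, Matrix.one_mulVec, hc]
  have hm : ((α:ℂ) • (1:Matrix (Fin n) (Fin n) ℂ) - C).mulVec v = (α:ℂ) • v - c := by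
    simp [Matrix.sub_mulVec, Matrix.smul_mulVec, Matrix.one_mulVec, hc]
  rw [hp, hm]
  unfold Nq
  have hconj : star c ⬝ᵥ v = star (star v ⬝ᵥ c) := star_dot_comm v c
  simp only [star_add, star_sub, star_smul, add_dotProduct, dotProduct_add,
    sub_dotProduct, dotProduct_sub, smul_dotProduct, dotProduct_smul, smul_eq_mul,
    RCLike.star_def, Complex.conj_ofReal]
  rw [hconj]
  simp only [Complex.sub_re, Complex.add_re, Complex.mul_re, Complex.ofReal_re,
    Complex.ofReal_im, Complex.conj_re, Complex.conj_im]
  have hre : (star (star v ⬝ᵥ c)).re = (star v ⬝ᵥ c).re := by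
    simp [RCLike.star_def]
  rw [hre]; ring

/-- A real matrix whose symmetric part is positive definite is invertible. -/
lemma isUnit_of_sym_posDef {B : Matrix (Fin n) (Fin n) ℝ} (h : (B + Bᵀ).PosDef) :
    IsUnit B := by
  rw [Matrix.isUnit_iff_isUnit_det, isUnit_iff_ne_zero]
  intro hdet
  obtain ⟨v, hv, hBv⟩ := (Matrix.exists_mulVec_eq_zero_iff).2 hdet
  have hpos := h.re_dotProduct_pos hv
  have : star v ⬝ᵥ (B + Bᵀ).mulVec v = 0 := by
    have h2 : v ⬝ᵥ Bᵀ.mulVec v = v ⬝ᵥ B.mulVec v := by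
      rw [Matrix.mulVec_transpose, dotProduct_comm, ← Matrix.dotProduct_mulVec]
    simp [Matrix.add_mulVec, dotProduct_add, hBv, h2]
  rw [this] at hpos
  simp at hpos

lemma posDef_smul_one {c : ℝ} (hc : 0 < c) :
    ((c • (1:Matrix (Fin n) (Fin n) ℝ))).PosDef := by
  rw [Matrix.smul_one_eq_diagonal]
  exact Matrix.PosDef.diagonal fun _ => hc

lemma eq_zero_of_mulVec_eq_zero {M : Matrix (Fin n) (Fin n) ℂ} (h : IsUnit M)
    {v : Fin n → ℂ} (hv : M.mulVec v = 0) : v = 0 := by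
  have hdet : IsUnit M.det := (Matrix.isUnit_iff_isUnit_det M).1 h
  have h1 := Matrix.nonsing_inv_mul M hdet
  calc v = ((M⁻¹ * M).mulVec v) := by rw [h1, Matrix.one_mulVec]
    _ = M⁻¹.mulVec (M.mulVec v) := by rw [Matrix.mulVec_mulVec]
    _ = 0 := by rw [hv, Matrix.mulVec_zero]

lemma isUnit_map {B : Matrix (Fin n) (Fin n) ℝ} (h : IsUnit B) :
    IsUnit (B.map Complex.ofReal) := by
  have := h.map (Complex.ofRealHom.mapMatrix)
  exact this

lemma map_smul_one_add (α : ℝ) (B : Matrix (Fin n) (Fin n) ℝ) :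
    (α • (1:Matrix (Fin n) (Fin n) ℝ) + B).map Complex.ofReal
      = (α:ℂ) • (1:Matrix (Fin n) (Fin n) ℂ) + B.map Complex.ofReal := by
  ext i j
  simp [Matrix.map_apply, Matrix.one_apply, apply_ite]

lemma map_smul_one_sub (α : ℝ) (B : Matrix (Fin n) (Fin n) ℝ) :
    (α • (1:Matrix (Fin n) (Fin n) ℝ) - B).map Complex.ofReal
      = (α:ℂ) • (1:Matrix (Fin n) (Fin n) ℂ) - B.map Complex.ofReal := by
  ext i j
  simp [Matrix.map_apply, Matrix.one_apply, apply_ite]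

lemma map_mul' (A B : Matrix (Fin n) (Fin n) ℝ) :
    (A * B).map Complex.ofReal = A.map Complex.ofReal * B.map Complex.ofReal :=
  Matrix.map_mul (f := Complex.ofRealHom)

lemma map_one' : ((1:Matrix (Fin n) (Fin n) ℝ)).map Complex.ofReal = 1 := by
  ext i j
  simp [Matrix.map_apply, Matrix.one_apply, apply_ite]

lemma eigvec_of_mem_spectrum {M : Matrix (Fin n) (Fin n) ℂ} {μ : ℂ}
    (hμ : μ ∈ spectrum ℂ M) : ∃ v ≠ 0, M.mulVec v = μ • v := by
  rw [spectrum.mem_iff] at hμ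
  have halg : (algebraMap ℂ (Matrix (Fin n) (Fin n) ℂ)) μ = μ • 1 :=
    Algebra.algebraMap_eq_smul_one μ
  rw [halg] at hμ
  have hdet : (μ • (1:Matrix (Fin n) (Fin n) ℂ) - M).det = 0 := by
    by_contra hd
    exact hμ ((Matrix.isUnit_iff_isUnit_det _).2 (isUnit_iff_ne_zero.2 hd))
  obtain ⟨v, hv, hMv⟩ := (Matrix.exists_mulVec_eq_zero_iff).2 hdet
  refine ⟨v, hv, ?_⟩
  rw [Matrix.sub_mulVec, Matrix.smul_mulVec, Matrix.one_mulVec, sub_eq_zero] at hMv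
  exact hMv.symm

lemma radius_lt_one {M : Matrix (Fin n) (Fin n) ℂ}
    (h : ∀ μ ∈ spectrum ℂ M, ‖μ‖₊ < 1) : spectralRadius ℂ M < 1 := by
  have hfin := Matrix.finite_spectrum M
  have hle : spectralRadius ℂ M ≤ hfin.toFinset.sup (fun k => (‖k‖₊ : ENNReal)) := by
    refine iSup₂_le fun k hk => ?_
    exact Finset.le_sup (f := fun k => (‖k‖₊ : ENNReal)) (hfin.mem_toFinset.2 hk)
  refine lt_of_le_of_lt hle ?_
  rw [Finset.sup_lt_iff (by norm_num : (⊥:ENNReal) < 1)]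
  intro k hk
  have := h k (hfin.mem_toFinset.1 hk)
  exact_mod_cast this

end STSAux

open STSAux

set_option maxHeartbeats 1000000

/-- Convergence of the triangular and skew-symmetric splitting (STS) iteration: if
`A + Aᵀ` is positive definite, `A = L0 + D + U0` is the decomposition of `A` into
strictly lower triangular, diagonal and strictly upper triangular parts, and
`U = D + U0 + L0ᵀ`, `S = L0 − L0ᵀ`, then for every `α > 0` the matrices `αI + U` and
`αI + S` are invertible and the iteration matrix
`T_α = (αI + S)⁻¹(αI − U)(αI + U)⁻¹(αI − S)` has spectral radius `< 1`. -/
theorem sts_iteration_convergence (n : ℕ) (A L0 D U0 : Matrix (Fin n) (Fin n) ℝ)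
    (hpd : (A + Aᵀ).PosDef)
    (hL0 : ∀ i j : Fin n, i ≤ j → L0 i j = 0)
    (hD : ∀ i j : Fin n, i ≠ j → D i j = 0)
    (hU0 : ∀ i j : Fin n, j ≤ i → U0 i j = 0)
    (hA : A = L0 + D + U0)
    (U S : Matrix (Fin n) (Fin n) ℝ)
    (hU : U = D + U0 + L0ᵀ) (hS : S = L0 - L0ᵀ)
    (α : ℝ) (hα : 0 < α) :
    IsUnit (α • (1 : Matrix (Fin n) (Fin n) ℝ) + U) ∧
    IsUnit (α • (1 : Matrix (Fin n) (Fin n) ℝ) + S) ∧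
    spectralRadius ℂ
      (((α • (1 : Matrix (Fin n) (Fin n) ℝ) + S)⁻¹ *
        (α • (1 : Matrix (Fin n) (Fin n) ℝ) - U) *
        (α • (1 : Matrix (Fin n) (Fin n) ℝ) + U)⁻¹ *
        (α • (1 : Matrix (Fin n) (Fin n) ℝ) - S)).map Complex.ofReal) < 1 := by
  -- basic structural facts
  have hUUt : U + Uᵀ = A + Aᵀ := by
    subst hU hA
    simp only [Matrix.transpose_add, Matrix.transpose_transpose]
    abel
  have hSskew : Sᵀ = -S := by
    subst hS
    simp only [Matrix.transpose_sub, Matrix.transpose_transpose]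
    abel
  set W : Matrix (Fin n) (Fin n) ℝ := α • (1 : Matrix (Fin n) (Fin n) ℝ) + U with hWdef
  set X : Matrix (Fin n) (Fin n) ℝ := α • (1 : Matrix (Fin n) (Fin n) ℝ) - U with hXdef
  set P : Matrix (Fin n) (Fin n) ℝ := α • (1 : Matrix (Fin n) (Fin n) ℝ) + S with hPdef
  set Y : Matrix (Fin n) (Fin n) ℝ := α • (1 : Matrix (Fin n) (Fin n) ℝ) - S with hYdef
  have h2α : (0:ℝ) < 2 * α := by linarith
  -- invertibility of W
  have hWsym : W + Wᵀ = (2*α) • (1 : Matrix (Fin n) (Fin n) ℝ) + (A + Aᵀ) := by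
    rw [hWdef, ← hUUt, Matrix.transpose_add, Matrix.transpose_smul, Matrix.transpose_one]
    module
  have hUnitW : IsUnit W := isUnit_of_sym_posDef (by
    rw [hWsym]; exact (posDef_smul_one h2α).add hpd)
  -- invertibility of P and Y
  have hPsym : P + Pᵀ = (2*α) • (1 : Matrix (Fin n) (Fin n) ℝ) := by
    rw [hPdef, Matrix.transpose_add, Matrix.transpose_smul, Matrix.transpose_one, hSskew]
    module
  have hUnitP : IsUnit P := isUnit_of_sym_posDef (by rw [hPsym]; exact posDef_smul_one h2α)
  have hYsym : Y + Yᵀ = (2*α) • (1 : Matrix (Fin n) (Fin n) ℝ) := by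
    rw [hYdef, Matrix.transpose_sub, Matrix.transpose_smul, Matrix.transpose_one, hSskew]
    module
  have hUnitY : IsUnit Y := isUnit_of_sym_posDef (by rw [hYsym]; exact posDef_smul_one h2α)
  refine ⟨hUnitW, hUnitP, ?_⟩
  -- complexified matrices
  set Uc := U.map Complex.ofReal with hUc
  set Sc := S.map Complex.ofReal with hSc
  have hWc : W.map Complex.ofReal = (α:ℂ) • 1 + Uc := map_smul_one_add α U
  have hXc : X.map Complex.ofReal = (α:ℂ) • 1 - Uc := map_smul_one_sub α U
  have hPc : P.map Complex.ofReal = (α:ℂ) • 1 + Sc := map_smul_one_add α S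
  have hYc : Y.map Complex.ofReal = (α:ℂ) • 1 - Sc := map_smul_one_sub α S
  -- the strict contraction property of the U-Cayley factor
  have hquadU : ∀ x : Fin n → ℝ, x ≠ 0 → 0 < x ⬝ᵥ U.mulVec x := by
    intro x hx
    have h2 : x ⬝ᵥ Uᵀ.mulVec x = x ⬝ᵥ U.mulVec x := by
      rw [Matrix.mulVec_transpose, dotProduct_comm, ← Matrix.dotProduct_mulVec]
    have hpos := hpd.re_dotProduct_pos hx
    have hsum : x ⬝ᵥ (A + Aᵀ).mulVec x = 2 * (x ⬝ᵥ U.mulVec x) := by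
      rw [← hUUt, Matrix.add_mulVec, dotProduct_add, h2]; ring
    have : star x ⬝ᵥ (A + Aᵀ).mulVec x = x ⬝ᵥ (A + Aᵀ).mulVec x := by simp
    rw [this, hsum] at hpos
    simp only [RCLike.re_to_real] at hpos
    linarith [hpos]
  have hquadU' : ∀ x : Fin n → ℝ, 0 ≤ x ⬝ᵥ U.mulVec x := by
    intro x
    rcases eq_or_ne x 0 with rfl | hx
    · simp
    · exact le_of_lt (hquadU x hx)
  have hcontr : ∀ z : Fin n → ℂ, z ≠ 0 →
      Nq (((α:ℂ) • 1 - Uc).mulVec z) < Nq (((α:ℂ) • 1 + Uc).mulVec z) := by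
    intro z hz
    have hid := diff_identity Uc α z
    have hreform := re_form U z
    rw [← hUc] at hreform
    have hzparts : (fun i => (z i).re) ≠ 0 ∨ (fun i => (z i).im) ≠ 0 := by
      by_contra hcon
      push_neg at hcon
      apply hz
      funext i
      have h1 : (z i).re = 0 := congrFun hcon.1 i
      have h2 : (z i).im = 0 := congrFun hcon.2 i
      exact Complex.ext h1 h2
    have hpos : 0 < (star z ⬝ᵥ Uc.mulVec z).re := by
      rw [hreform]
      rcases hzparts with h | h
      · have := hquadU _ h
        have h2 := hquadU' (fun i => (z i).im)
        linarith
      · have := hquadU _ h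
        have h2 := hquadU' (fun i => (z i).re)
        linarith
    nlinarith [hid]
  -- the isometry property of the S-Cayley factor
  have hskew : ∀ x : Fin n → ℝ, x ⬝ᵥ S.mulVec x = 0 := by
    intro x
    have h1 : x ⬝ᵥ Sᵀ.mulVec x = x ⬝ᵥ S.mulVec x := by
      rw [Matrix.mulVec_transpose, dotProduct_comm, ← Matrix.dotProduct_mulVec]
    rw [hSskew] at h1
    simp only [Matrix.neg_mulVec, dotProduct_neg] at h1
    linarith
  have hiso : ∀ v : Fin n → ℂ,
      Nq (((α:ℂ) • 1 - Sc).mulVec v) = Nq (((α:ℂ) • 1 + Sc).mulVec v) := by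
    intro v
    have hid := diff_identity Sc α v
    have hreform := re_form S v
    rw [← hSc] at hreform
    rw [hskew, hskew] at hreform
    rw [hreform] at hid
    simp only [add_zero, mul_zero] at hid
    linarith
  -- spectrum argument
  apply radius_lt_one
  intro μ hμ
  obtain ⟨v, hv, hMv⟩ := eigvec_of_mem_spectrum hμ
  -- decompose the iteration matrix
  have hmap : ((P⁻¹ * X * W⁻¹ * Y).map Complex.ofReal)
      = (P⁻¹.map Complex.ofReal) * (X.map Complex.ofReal) *
        (W⁻¹.map Complex.ofReal) * (Y.map Complex.ofReal) := by
    rw [map_mul', map_mul', map_mul']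
  rw [hmap] at hMv
  set x1 := (Y.map Complex.ofReal).mulVec v with hx1def
  set z := (W⁻¹.map Complex.ofReal).mulVec x1 with hzdef
  set y := (X.map Complex.ofReal).mulVec z with hydef
  have hMv' : (P⁻¹.map Complex.ofReal).mulVec y = μ • v := by
    rw [hydef, hzdef, hx1def, Matrix.mulVec_mulVec, Matrix.mulVec_mulVec,
      Matrix.mulVec_mulVec]
    exact hMv
  -- mapped product identities
  have hPPinv : (P.map Complex.ofReal) * (P⁻¹.map Complex.ofReal) = 1 := by
    rw [← map_mul', Matrix.mul_nonsing_inv P ((Matrix.isUnit_iff_isUnit_det P).1 hUnitP), map_one']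
  have hWWinv : (W.map Complex.ofReal) * (W⁻¹.map Complex.ofReal) = 1 := by
    rw [← map_mul', Matrix.mul_nonsing_inv W ((Matrix.isUnit_iff_isUnit_det W).1 hUnitW), map_one']
  have hy : y = μ • (P.map Complex.ofReal).mulVec v := by
    calc y = ((P.map Complex.ofReal) * (P⁻¹.map Complex.ofReal)).mulVec y := by
          rw [hPPinv, Matrix.one_mulVec]
      _ = (P.map Complex.ofReal).mulVec ((P⁻¹.map Complex.ofReal).mulVec y) :=
          (Matrix.mulVec_mulVec y (P.map Complex.ofReal) (P⁻¹.map Complex.ofReal)).symm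
      _ = (P.map Complex.ofReal).mulVec (μ • v) := by rw [hMv']
      _ = μ • (P.map Complex.ofReal).mulVec v := by rw [Matrix.mulVec_smul]
  have hWz : (W.map Complex.ofReal).mulVec z = x1 := by
    rw [hzdef, Matrix.mulVec_mulVec, hWWinv, Matrix.one_mulVec]
  -- nonvanishing
  have hx1ne : x1 ≠ 0 := by
    intro h0
    exact hv (eq_zero_of_mulVec_eq_zero (isUnit_map hUnitY) h0)
  have hzne : z ≠ 0 := by
    intro h0
    apply hx1ne
    rw [← hWz, h0, Matrix.mulVec_zero]
  have hPvne : (P.map Complex.ofReal).mulVec v ≠ 0 := by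
    intro h0
    exact hv (eq_zero_of_mulVec_eq_zero (isUnit_map hUnitP) h0)
  -- the chain of inequalities
  have h1 : Nq y < Nq ((W.map Complex.ofReal).mulVec z) := by
    rw [hydef, hXc, hWc]
    exact hcontr z hzne
  rw [hWz] at h1
  have h2 : Nq x1 = Nq ((P.map Complex.ofReal).mulVec v) := by
    rw [hx1def, hYc, hPc]
    exact hiso v
  have h3 : Nq y = Complex.normSq μ * Nq ((P.map Complex.ofReal).mulVec v) := by
    rw [hy, Nq_smul]
  have hNp : 0 < Nq ((P.map Complex.ofReal).mulVec v) := Nq_pos hPvne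
  have hnormSq : Complex.normSq μ < 1 := by
    rw [h3, h2] at h1
    nlinarith
  have hnorm : ‖μ‖ < 1 := by
    have habs : ‖μ‖^2 = Complex.normSq μ := by
      rw [Complex.sq_norm]
    nlinarith [norm_nonneg μ]
  rw [← NNReal.coe_lt_coe]
  push_cast
  simpa using hnorm
end
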